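/- arXiv:2605.30618 — 6 statements merged into one kernel-verified Lean document; each statement's English description precedes it below -/
import Mathlib

section
/- Over strict timed HT-traces (τ(i) < τ(i+1) for consecutive indices), for all metric formulas φ, ψ and all steps k: M,k ⊨ φ U_{[0,0]} ψ iff M,k ⊨ ψ; likewise M,k ⊨ φ R_{[0,0]} ψ iff M,k ⊨ ψ; M,k ⊨ φ S_{[0,0]} ψ iff M,k ⊨ ψ; and M,k ⊨ φ T_{[0,0]} ψ iff M,k ⊨ ψ. -/
open scoped Classical ENat

/-- Interval `[a, b]` with `a : ℕ` and `b : ℕ∞` (possibly `ω = ⊤`). -/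
abbrev Ivl : Type := ℕ × ℕ∞

/-- Membership `x ∈ [a, b]`. -/
def memI (I : Ivl) (x : ℕ) : Prop := I.1 ≤ x ∧ (x : ℕ∞) ≤ I.2

/-- Metric temporal formulas over alphabet `A`.  Non-metric operators are the
metric ones with interval `(0, ⊤)`, i.e. `[0, ω]`. -/
inductive MF (A : Type) : Type
  | bot
  | atom (a : A)
  | and (φ ψ : MF A)
  | or (φ ψ : MF A)
  | imp (φ ψ : MF A)
  | prev (I : Ivl) (φ : MF A)      -- ●_I
  | wprev (I : Ivl) (φ : MF A)     -- ●̂_I (weak previous)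
  | next (I : Ivl) (φ : MF A)      -- ○_I
  | wnext (I : Ivl) (φ : MF A)     -- ◯̂_I (weak next)
  | since (I : Ivl) (φ ψ : MF A)   -- φ S_I ψ
  | trigger (I : Ivl) (φ ψ : MF A) -- φ T_I ψ
  | until_ (I : Ivl) (φ ψ : MF A)  -- φ U_I ψ
  | release (I : Ivl) (φ ψ : MF A) -- φ R_I ψ

namespace MF
def top {A : Type} : MF A := imp bot bot
def neg {A : Type} (φ : MF A) : MF A := imp φ bot
/-- `□ φ := ⊥ R_{[0,ω]} φ`. -/
def always {A : Type} (φ : MF A) : MF A := release (0, ⊤) bot φ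
/-- `◇ φ := ⊤ U_{[0,ω]} φ`. -/
def evtl {A : Type} (φ : MF A) : MF A := until_ (0, ⊤) top φ
/-- `F := ¬ ○_{[0,ω]} ⊤` (final). -/
def final {A : Type} : MF A := neg (next (0, ⊤) top)
/-- `I := ¬ ●_{[0,ω]} ⊤` (initial). -/
def initial {A : Type} : MF A := neg (prev (0, ⊤) top)
end MF

/-- Timed HT-trace of length `lam ∈ ℕ ∪ {ω}` over alphabet `A`. -/
structure TimedTrace (A : Type) where
  lam : ℕ∞
  H : ℕ → Set A
  T : ℕ → Set A
  tau : ℕ → ℕ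
  sub : ∀ i : ℕ, (i : ℕ∞) < lam → H i ⊆ T i
  mono : ∀ i : ℕ, ((i + 1 : ℕ) : ℕ∞) < lam → tau i ≤ tau (i + 1)
  zero : tau 0 = 0

/-- Strictness: `τ(i) < τ(i+1)` for all consecutive indices in the domain. -/
def TimedTrace.strict {A : Type} (M : TimedTrace A) : Prop :=
  ∀ i : ℕ, ((i + 1 : ℕ) : ℕ∞) < M.lam → M.tau i < M.tau (i + 1)

/-- The total trace `(T, T)` associated with `(H, T)`. -/
def TimedTrace.tot {A : Type} (M : TimedTrace A) : TimedTrace A :=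
  { M with H := M.T, sub := fun _ _ => subset_rfl }

/-- MHT satisfaction `M, k ⊨ φ`. -/
def sat {A : Type} : TimedTrace A → ℕ → MF A → Prop
  | _, _, .bot => False
  | M, k, .atom a => a ∈ M.H k
  | M, k, .and φ ψ => sat M k φ ∧ sat M k ψ
  | M, k, .or φ ψ => sat M k φ ∨ sat M k ψ
  | M, k, .imp φ ψ =>
      (sat M k φ → sat M k ψ) ∧ (sat M.tot k φ → sat M.tot k ψ)
  | M, k, .prev I φ =>
      0 < k ∧ sat M (k - 1) φ ∧ memI I (M.tau k - M.tau (k - 1))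
  | M, k, .wprev I φ =>
      k = 0 ∨ sat M (k - 1) φ ∨ ¬ memI I (M.tau k - M.tau (k - 1))
  | M, k, .next I φ =>
      ((k + 1 : ℕ) : ℕ∞) < M.lam ∧ sat M (k + 1) φ ∧ memI I (M.tau (k + 1) - M.tau k)
  | M, k, .wnext I φ =>
      ((k + 1 : ℕ) : ℕ∞) = M.lam ∨ sat M (k + 1) φ ∨ ¬ memI I (M.tau (k + 1) - M.tau k)
  | M, k, .since I φ ψ =>
      ∃ j : ℕ, j ≤ k ∧ memI I (M.tau k - M.tau j) ∧ sat M j ψ ∧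
        ∀ i : ℕ, j < i → i ≤ k → sat M i φ
  | M, k, .trigger I φ ψ =>
      ∀ j : ℕ, j ≤ k → memI I (M.tau k - M.tau j) →
        sat M j ψ ∨ ∃ i : ℕ, j < i ∧ i ≤ k ∧ sat M i φ
  | M, k, .until_ I φ ψ =>
      ∃ j : ℕ, k ≤ j ∧ ((j : ℕ) : ℕ∞) < M.lam ∧ memI I (M.tau j - M.tau k) ∧ sat M j ψ ∧
        ∀ i : ℕ, k ≤ i → i < j → sat M i φ
  | M, k, .release I φ ψ =>
      ∀ j : ℕ, k ≤ j → ((j : ℕ) : ℕ∞) < M.lam → memI I (M.tau j - M.tau k) →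
        sat M j ψ ∨ ∃ i : ℕ, k ≤ i ∧ i < j ∧ sat M i φ

/-- The three-valued (Gödel) valuation associated with a timed HT-trace:
`0` (false), `1` (true there only), `2` (true here).  `sSup ∅ = 0` in `ℕ`, and
the `insert 2` realizes `inf ∅ = 2` (all values are `≤ 2`). -/
noncomputable def mval {A : Type} (M : TimedTrace A) : MF A → ℕ → ℕ
  | .bot, _ => 0
  | .atom a, k => if a ∈ M.H k then 2 else if a ∈ M.T k then 1 else 0
  | .and φ ψ, k => min (mval M φ k) (mval M ψ k)
  | .or φ ψ, k => max (mval M φ k) (mval M ψ k)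
  | .imp φ ψ, k => if mval M φ k ≤ mval M ψ k then 2 else mval M ψ k
  | .prev I φ, k =>
      if 0 < k ∧ memI I (M.tau k - M.tau (k - 1)) then mval M φ (k - 1) else 0
  | .wprev I φ, k =>
      if k = 0 ∨ ¬ memI I (M.tau k - M.tau (k - 1)) then 2 else mval M φ (k - 1)
  | .next I φ, k =>
      if ((k + 1 : ℕ) : ℕ∞) < M.lam ∧ memI I (M.tau (k + 1) - M.tau k) then
        mval M φ (k + 1) else 0
  | .wnext I φ, k =>
      if ((k + 1 : ℕ) : ℕ∞) = M.lam ∨ ¬ memI I (M.tau (k + 1) - M.tau k) then 2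
      else mval M φ (k + 1)
  | .since I φ ψ, k =>
      sSup {v : ℕ | ∃ j : ℕ, j ≤ k ∧ memI I (M.tau k - M.tau j) ∧
        v = min (mval M ψ j)
          (sInf (insert 2 {w : ℕ | ∃ i : ℕ, j < i ∧ i ≤ k ∧ w = mval M φ i}))}
  | .trigger I φ ψ, k =>
      sInf (insert 2 {v : ℕ | ∃ j : ℕ, j ≤ k ∧ memI I (M.tau k - M.tau j) ∧
        v = max (mval M ψ j)
          (sSup {w : ℕ | ∃ i : ℕ, j < i ∧ i ≤ k ∧ w = mval M φ i})})
  | .until_ I φ ψ, k =>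
      sSup {v : ℕ | ∃ j : ℕ, k ≤ j ∧ ((j : ℕ) : ℕ∞) < M.lam ∧
        memI I (M.tau j - M.tau k) ∧
        v = min (mval M ψ j)
          (sInf (insert 2 {w : ℕ | ∃ i : ℕ, k ≤ i ∧ i < j ∧ w = mval M φ i}))}
  | .release I φ ψ, k =>
      sInf (insert 2 {v : ℕ | ∃ j : ℕ, k ≤ j ∧ ((j : ℕ) : ℕ∞) < M.lam ∧
        memI I (M.tau j - M.tau k) ∧
        v = max (mval M ψ j)
          (sSup {w : ℕ | ∃ i : ℕ, k ≤ i ∧ i < j ∧ w = mval M φ i})})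

/-- over strict traces, the binary metric operators with interval
`[0,0]` collapse to their right-hand argument. -/
theorem zero_interval_collapse {A : Type} (M : TimedTrace A) (hstrict : M.strict)
    (φ ψ : MF A) (k : ℕ) (hk : (k : ℕ∞) < M.lam) :
    (sat M k (MF.until_ (0, (0 : ℕ∞)) φ ψ) ↔ sat M k ψ) ∧
    (sat M k (MF.release (0, (0 : ℕ∞)) φ ψ) ↔ sat M k ψ) ∧
    (sat M k (MF.since (0, (0 : ℕ∞)) φ ψ) ↔ sat M k ψ) ∧
    (sat M k (MF.trigger (0, (0 : ℕ∞)) φ ψ) ↔ sat M k ψ) := by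
  have hmono : ∀ i j : ℕ, i < j → ((j : ℕ) : ℕ∞) < M.lam → M.tau i < M.tau j := by
    intro i j hij hj
    induction j with
    | zero => omega
    | succ n ih =>
      have hstep : M.tau n < M.tau (n + 1) := hstrict n hj
      rcases Nat.lt_succ_iff_lt_or_eq.mp hij with h | h
      · have hn : ((n : ℕ) : ℕ∞) < M.lam := lt_trans (by exact_mod_cast Nat.lt_succ_self n) hj
        exact lt_trans (ih h hn) hstep
      · subst h; exact hstep
  have hmem0 : memI (0, (0 : ℕ∞)) 0 := ⟨le_refl 0, by simp⟩
  have hmemiff : ∀ x : ℕ, memI (0, (0 : ℕ∞)) x → x = 0 := by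
    intro x ⟨_, h2⟩
    have : (x : ℕ∞) ≤ (0 : ℕ∞) := h2
    have hx : x ≤ 0 := by exact_mod_cast this
    omega
  refine ⟨?_, ?_, ?_, ?_⟩
  · constructor
    · rintro ⟨j, hkj, hjlam, hmem, hψ, -⟩
      have hx := hmemiff _ hmem
      rcases eq_or_lt_of_le hkj with h | h
      · subst h; exact hψ
      · exact absurd hx (by have := hmono k j h hjlam; omega)
    · intro h
      exact ⟨k, le_refl k, hk, by simpa [Nat.sub_self] using hmem0, h, fun i h1 h2 => absurd (lt_of_le_of_lt h1 h2) (lt_irrefl _)⟩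
  · constructor
    · intro h
      rcases h k (le_refl k) hk (by simpa [Nat.sub_self] using hmem0) with h' | ⟨i, h1, h2, _⟩
      · exact h'
      · omega
    · intro h j hkj hjlam hmem
      rcases eq_or_lt_of_le hkj with he | he
      · subst he; exact Or.inl h
      · exact absurd (hmemiff _ hmem) (by have := hmono k j he hjlam; omega)
  · constructor
    · rintro ⟨j, hjk, hmem, hψ, -⟩
      rcases eq_or_lt_of_le hjk with h | h
      · subst h; exact hψ
      · have hjlam : ((k : ℕ) : ℕ∞) < M.lam := hk
        exact absurd (hmemiff _ hmem) (by have := hmono j k h hjlam; omega)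
    · intro h
      exact ⟨k, le_refl k, by simpa [Nat.sub_self] using hmem0, h, fun i h1 h2 => by omega⟩
  · constructor
    · intro h
      rcases h k (le_refl k) (by simpa [Nat.sub_self] using hmem0) with h' | ⟨i, h1, h2, _⟩
      · exact h'
      · omega
    · intro h j hjk hmem
      rcases eq_or_lt_of_le hjk with he | he
      · subst he; exact Or.inl h
      · exact absurd (hmemiff _ hmem) (by have := hmono j k he hk; omega)
end

section
/- Over strict timed HT-traces, for all n ≥ 0 and all metric formulas φ, ψ, the unfolding equivalence for metric until holds: M,k ⊨ φ U_{[0,n]} ψ iff M,k ⊨ ψ ∨ (φ ∧ ⋁_{x=1}^{n} ○_{[x,x]}(φ U_{[0,n−x]} ψ)). -/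
open scoped Classical ENat

/-- Finite disjunction `⋁`, with empty disjunction `⊥`. -/
def bigOr {A : Type} : List (MF A) → MF A
  | [] => MF.bot
  | χ :: l => MF.or χ (bigOr l)

/-- Finite conjunction `⋀`, with empty conjunction `⊤`. -/
def bigAnd {A : Type} : List (MF A) → MF A
  | [] => MF.top
  | χ :: l => MF.and χ (bigAnd l)

lemma tau_mono' {A : Type} (M : TimedTrace A) {i j : ℕ} (hij : i ≤ j)
    (hj : (j : ℕ∞) < M.lam) : M.tau i ≤ M.tau j := by
  induction j with
  | zero => have : i = 0 := Nat.le_zero.mp hij; simp [this]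
  | succ m ih =>
    rcases Nat.lt_or_ge i (m + 1) with h | h
    · have hm : ((m : ℕ) : ℕ∞) < M.lam :=
        lt_of_le_of_lt (by exact_mod_cast Nat.le_succ m) hj
      exact (ih (Nat.lt_succ_iff.mp h) hm).trans (M.mono m hj)
    · have : i = m + 1 := le_antisymm hij h
      simp [this]

lemma sat_bigOr {A : Type} (M : TimedTrace A) (k : ℕ) (l : List (MF A)) :
    sat M k (bigOr l) ↔ ∃ χ ∈ l, sat M k χ := by
  induction l with
  | nil => simp [bigOr, sat]
  | cons a l ih => simp [bigOr, sat, ih]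

/-- over strict traces,
`φ U_{[0,n]} ψ  ≡  ψ ∨ (φ ∧ ⋁_{x=1}^{n} ○_{[x,x]} (φ U_{[0,n−x]} ψ))`. -/
theorem until_unfolding {A : Type} (M : TimedTrace A) (hstrict : M.strict)
    (n : ℕ) (φ ψ : MF A) (k : ℕ) (hk : (k : ℕ∞) < M.lam) :
    sat M k (MF.until_ (0, (n : ℕ∞)) φ ψ) ↔
    sat M k (MF.or ψ (MF.and φ (bigOr ((List.range n).map (fun i =>
      MF.next (i + 1, ((i + 1 : ℕ) : ℕ∞))
        (MF.until_ (0, ((n - (i + 1) : ℕ) : ℕ∞)) φ ψ)))))) := by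
  simp only [sat, sat_bigOr, List.mem_map, List.mem_range]
  constructor
  · rintro ⟨j, hkj, hjlam, ⟨-, hub⟩, hψ, hφ⟩
    rcases eq_or_lt_of_le hkj with rfl | hlt
    · exact Or.inl hψ
    · right
      have hk1 : ((k + 1 : ℕ) : ℕ∞) < M.lam :=
        lt_of_le_of_lt (by exact_mod_cast hlt) hjlam
      have hst : M.tau k < M.tau (k + 1) := hstrict k hk1
      have htm : M.tau (k + 1) ≤ M.tau j := tau_mono' M hlt hjlam
      have hubn : M.tau j - M.tau k ≤ n := Nat.cast_le.mp hub
      set d := M.tau (k + 1) - M.tau k with hd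
      have hd1 : 1 ≤ d := by omega
      have hdn : d ≤ n := by omega
      refine ⟨hφ k le_rfl hlt, _, ⟨d - 1, by omega, rfl⟩, ?_⟩
      simp only [sat]
      exact ⟨hk1,
        ⟨j, hlt, hjlam, ⟨Nat.zero_le _, Nat.cast_le.mpr (by omega)⟩, hψ,
          fun i h1 h2 => hφ i (by omega) h2⟩,
        ⟨by omega, Nat.cast_le.mpr (by omega)⟩⟩
  · rintro (hψ | ⟨hφk, ⟨χ, ⟨i, hin, rfl⟩, hk1, ⟨j, hk1j, hjlam, ⟨-, hub⟩, hψj, hφ'⟩, hlo, hhi⟩⟩)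
    · exact ⟨k, le_rfl, hk, ⟨Nat.zero_le _, Nat.cast_le.mpr (by omega)⟩, by simpa using hψ,
        fun i h1 h2 => absurd h2 (by omega)⟩
    · have htm : M.tau (k + 1) ≤ M.tau j := tau_mono' M hk1j hjlam
      have hd : M.tau (k + 1) - M.tau k ≤ i + 1 := Nat.cast_le.mp hhi
      have hubn : M.tau j - M.tau (k + 1) ≤ n - (i + 1) := Nat.cast_le.mp hub
      have hst : M.tau k < M.tau (k + 1) := hstrict k hk1
      refine ⟨j, by omega, hjlam, ⟨Nat.zero_le _, Nat.cast_le.mpr (by omega)⟩, hψj,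
        fun i' h1 h2 => ?_⟩
      rcases eq_or_lt_of_le h1 with rfl | h
      · exact hφk
      · exact hφ' i' h h2
end

section
/- Over strict timed HT-traces, for all n ≥ 0 and all metric formulas φ, ψ, the unfolding equivalence for metric since holds: M,k ⊨ φ S_{[0,n]} ψ iff M,k ⊨ ψ ∨ (φ ∧ ⋁_{x=1}^{n} ●_{[x,x]}(φ S_{[0,n−x]} ψ)). -/
open scoped Classical ENat

lemma tau_mono_of_strict {A : Type} (M : TimedTrace A) (hstrict : M.strict) :
    ∀ a b : ℕ, a ≤ b → (b : ℕ∞) < M.lam → M.tau a ≤ M.tau b := by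
  intro a b hab hb
  induction b with
  | zero => simp_all
  | succ b ih =>
    rcases Nat.lt_or_ge a (b+1) with h | h
    · have hb' : (b : ℕ∞) < M.lam := lt_of_le_of_lt (by exact_mod_cast Nat.le_succ b) hb
      exact le_trans (ih (Nat.lt_succ_iff.mp h) hb') (le_of_lt (hstrict b hb))
    · have : a = b + 1 := le_antisymm hab h
      simp [this]

/-- over strict traces,
`φ S_{[0,n]} ψ  ≡  ψ ∨ (φ ∧ ⋁_{x=1}^{n} ●_{[x,x]} (φ S_{[0,n−x]} ψ))`. -/
theorem since_unfolding {A : Type} (M : TimedTrace A) (hstrict : M.strict)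
    (n : ℕ) (φ ψ : MF A) (k : ℕ) (hk : (k : ℕ∞) < M.lam) :
    sat M k (MF.since (0, (n : ℕ∞)) φ ψ) ↔
    sat M k (MF.or ψ (MF.and φ (bigOr ((List.range n).map (fun i =>
      MF.prev (i + 1, ((i + 1 : ℕ) : ℕ∞))
        (MF.since (0, ((n - (i + 1) : ℕ) : ℕ∞)) φ ψ)))))) := by
  simp only [sat, sat_bigOr, List.mem_map, List.mem_range]
  constructor
  · rintro ⟨j, hjk, ⟨-, hle⟩, hψ, hφ⟩
    have hle' : M.tau k - M.tau j ≤ n := by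
      have : ((M.tau k - M.tau j : ℕ) : ℕ∞) ≤ ((n : ℕ) : ℕ∞) := hle
      exact_mod_cast this
    rcases eq_or_lt_of_le hjk with rfl | hjk
    · exact Or.inl hψ
    · have hk1 : 0 < k := Nat.lt_of_le_of_lt (Nat.zero_le j) hjk
      have hkk : ((k - 1 + 1 : ℕ) : ℕ∞) < M.lam := by
        rw [Nat.sub_add_cancel hk1]; exact hk
      have hstep : M.tau (k - 1) < M.tau k := by
        have := hstrict (k - 1) hkk
        rwa [Nat.sub_add_cancel hk1] at this
      have hk1lam : ((k - 1 : ℕ) : ℕ∞) < M.lam :=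
        lt_of_le_of_lt (by exact_mod_cast Nat.sub_le k 1) hk
      have hjτ : M.tau j ≤ M.tau (k - 1) :=
        tau_mono_of_strict M hstrict j (k - 1) (Nat.le_sub_one_of_lt hjk) hk1lam
      set d := M.tau k - M.tau (k - 1) with hd
      have hd1 : 1 ≤ d := by omega
      have hdn : d ≤ n := le_trans (Nat.sub_le_sub_left hjτ (M.tau k)) hle'
      refine Or.inr ⟨hφ k hjk le_rfl, ?_⟩
      refine ⟨_, ⟨d - 1, by omega, rfl⟩, hk1, ?_, ?_⟩
      · -- sat M (k-1) (since (0, n - d) φ ψ)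
        refine ⟨j, Nat.le_sub_one_of_lt hjk, ⟨Nat.zero_le _, ?_⟩, hψ, ?_⟩
        · show ((M.tau (k - 1) - M.tau j : ℕ) : ℕ∞) ≤ ((n - (d - 1 + 1) : ℕ) : ℕ∞)
          exact_mod_cast (by omega : M.tau (k - 1) - M.tau j ≤ n - (d - 1 + 1))
        · intro i hji hik
          exact hφ i hji (le_trans hik (Nat.sub_le k 1))
      · refine ⟨by show d - 1 + 1 ≤ d; omega, ?_⟩
        show ((M.tau k - M.tau (k - 1) : ℕ) : ℕ∞) ≤ ((d - 1 + 1 : ℕ) : ℕ∞)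
        exact_mod_cast (by omega : M.tau k - M.tau (k - 1) ≤ d - 1 + 1)
  · rintro (hψ | ⟨hφk, ⟨_, ⟨x, hxn, rfl⟩, hk1, hS, hmem⟩⟩)
    · exact ⟨k, le_rfl, ⟨Nat.zero_le _, by simp⟩, hψ, fun i h1 h2 => absurd h2 (by omega)⟩
    · obtain ⟨j, hjk1, ⟨-, hle⟩, hψ, hφ⟩ := hS
      have hd : M.tau k - M.tau (k - 1) = x + 1 := by
        obtain ⟨h1, h2⟩ := hmem
        have h2'' : ((M.tau k - M.tau (k - 1) : ℕ) : ℕ∞) ≤ ((x + 1 : ℕ) : ℕ∞) := h2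
        have h2' : M.tau k - M.tau (k - 1) ≤ x + 1 := by exact_mod_cast h2''
        omega
      have hle' : M.tau (k - 1) - M.tau j ≤ n - (x + 1) := by
        have : ((M.tau (k - 1) - M.tau j : ℕ) : ℕ∞) ≤ ((n - (x + 1) : ℕ) : ℕ∞) := hle
        exact_mod_cast this
      have hk1lam : ((k - 1 : ℕ) : ℕ∞) < M.lam :=
        lt_of_le_of_lt (by exact_mod_cast Nat.sub_le k 1) hk
      have hjτ : M.tau j ≤ M.tau (k - 1) :=
        tau_mono_of_strict M hstrict j (k - 1) hjk1 hk1lam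
      have hτk : M.tau (k - 1) ≤ M.tau k := by omega
      refine ⟨j, le_trans hjk1 (Nat.sub_le k 1), ⟨Nat.zero_le _, ?_⟩, hψ, ?_⟩
      · show ((M.tau k - M.tau j : ℕ) : ℕ∞) ≤ ((n : ℕ) : ℕ∞)
        exact_mod_cast (by omega : M.tau k - M.tau j ≤ n)
      · intro i hji hik
        rcases Nat.lt_or_ge i k with h | h
        · exact hφ i hji (by omega)
        · have : i = k := le_antisymm hik h
          exact this ▸ hφk
end

section
/- Over strict timed HT-traces, for all n ≥ 0 and all metric formulas φ, ψ, the unfolding equivalence for metric trigger holds: M,k ⊨ φ T_{[0,n]} ψ iff M,k ⊨ ψ ∧ (φ ∨ ⋀_{x=1}^{n} ●̂_{[x,x]}(φ T_{[0,n−x]} ψ)). -/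
open scoped Classical ENat

lemma tau_le_tau {A : Type} (M : TimedTrace A) :
    ∀ j : ℕ, ((j : ℕ) : ℕ∞) < M.lam → ∀ i : ℕ, i ≤ j → M.tau i ≤ M.tau j := by
  intro j
  induction j with
  | zero => intro _ i hi; interval_cases i; rfl
  | succ j ih =>
    intro hj i hi
    rcases Nat.lt_or_ge i (j + 1) with h | h
    · have hj' : ((j : ℕ) : ℕ∞) < M.lam :=
        lt_of_le_of_lt (by exact_mod_cast Nat.le_succ j) hj
      exact le_trans (ih hj' i (Nat.lt_succ_iff.mp h)) (M.mono j hj)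
    · have : i = j + 1 := le_antisymm hi h
      subst this; rfl

lemma sat_bigAnd {A : Type} (M : TimedTrace A) (k : ℕ) (l : List (MF A)) :
    sat M k (bigAnd l) ↔ ∀ χ ∈ l, sat M k χ := by
  induction l with
  | nil => simp [bigAnd, MF.top, sat]
  | cons χ l ih => simp [bigAnd, sat, ih]

/-- over strict traces,
`φ T_{[0,n]} ψ  ≡  ψ ∧ (φ ∨ ⋀_{x=1}^{n} ●̂_{[x,x]} (φ T_{[0,n−x]} ψ))`. -/
theorem trigger_unfolding {A : Type} (M : TimedTrace A) (hstrict : M.strict)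
    (n : ℕ) (φ ψ : MF A) (k : ℕ) (hk : (k : ℕ∞) < M.lam) :
    sat M k (MF.trigger (0, (n : ℕ∞)) φ ψ) ↔
    sat M k (MF.and ψ (MF.or φ (bigAnd ((List.range n).map (fun i =>
      MF.wprev (i + 1, ((i + 1 : ℕ) : ℕ∞))
        (MF.trigger (0, ((n - (i + 1) : ℕ) : ℕ∞)) φ ψ)))))) := by
  have hmem0 : ∀ x : ℕ, memI (0, (n : ℕ∞)) x ↔ x ≤ n := by
    intro x; constructor
    · rintro ⟨-, h⟩
      have h' : (x : ℕ∞) ≤ (n : ℕ∞) := h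
      exact_mod_cast h'
    · intro h
      refine ⟨Nat.zero_le _, ?_⟩
      show (x : ℕ∞) ≤ (n : ℕ∞)
      exact_mod_cast h
  simp only [sat, sat_bigAnd, List.mem_map, List.mem_range]
  constructor
  · intro H
    have hψk : sat M k ψ := by
      have := H k le_rfl (by rw [hmem0]; omega)
      rcases this with h | ⟨i, hi1, hi2, _⟩
      · exact h
      · omega
    refine ⟨hψk, ?_⟩
    by_cases hφk : sat M k φ
    · exact Or.inl hφk
    · right
      rintro χ ⟨x, hxn, rfl⟩
      by_cases hk0 : k = 0
      · exact Or.inl hk0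
      right
      by_cases hd : memI (x + 1, ((x + 1 : ℕ) : ℕ∞)) (M.tau k - M.tau (k - 1))
      · left
        intro j hj hjmem
        have hdval : M.tau k - M.tau (k - 1) = x + 1 := by
          obtain ⟨h1, h2⟩ := hd
          have h2a : ((M.tau k - M.tau (k - 1) : ℕ) : ℕ∞) ≤ ((x + 1 : ℕ) : ℕ∞) := h2
          have h2' : M.tau k - M.tau (k - 1) ≤ x + 1 := by exact_mod_cast h2a
          omega
        have hτmono : M.tau (k - 1) ≤ M.tau k := by
          have := tau_le_tau M k hk (k - 1) (by omega); exact this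
        have hτj : M.tau j ≤ M.tau (k - 1) := by
          apply tau_le_tau M (k - 1)
          · exact lt_of_le_of_lt (by exact_mod_cast Nat.sub_le k 1) hk
          · exact hj
        have hjk : M.tau k - M.tau j ≤ n := by
          obtain ⟨-, h2⟩ := hjmem
          have h2a : ((M.tau (k - 1) - M.tau j : ℕ) : ℕ∞) ≤ ((n - (x + 1) : ℕ) : ℕ∞) := h2
          have : M.tau (k - 1) - M.tau j ≤ (n - (x + 1) : ℕ) := by exact_mod_cast h2a
          omega
        have := H j (by omega) (by rw [hmem0]; exact hjk)
        rcases this with h | ⟨i, hi1, hi2, hφi⟩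
        · exact Or.inl h
        · right
          refine ⟨i, hi1, ?_, hφi⟩
          rcases Nat.lt_or_ge i k with h' | h'
          · omega
          · exact absurd ((by omega : i = k) ▸ hφi) hφk
      · exact Or.inr hd
  · rintro ⟨hψk, H⟩ j hj hjmem
    rcases Nat.eq_or_lt_of_le hj with rfl | hjk
    · exact Or.inl hψk
    rcases H with hφk | H
    · exact Or.inr ⟨k, hjk, le_rfl, hφk⟩
    have hk0 : 0 < k := by omega
    have hτmono : M.tau (k - 1) < M.tau k := by
      have := hstrict (k - 1) (by rw [Nat.sub_add_cancel hk0]; exact hk)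
      rwa [Nat.sub_add_cancel hk0] at this
    have hτj : M.tau j ≤ M.tau (k - 1) := by
      apply tau_le_tau M (k - 1)
      · exact lt_of_le_of_lt (by exact_mod_cast Nat.sub_le k 1) hk
      · omega
    set d := M.tau k - M.tau (k - 1) with hd
    have hd1 : 1 ≤ d := by omega
    have hdn : d ≤ n := by
      have := (hmem0 _).mp hjmem; omega
    have := H _ ⟨d - 1, by omega, rfl⟩
    rcases this with h | h | h
    · omega
    · have hc : ((M.tau (k - 1) - M.tau j : ℕ) : ℕ∞) ≤ ((n - (d - 1 + 1) : ℕ) : ℕ∞) := by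
        have h1 : M.tau (k - 1) - M.tau j ≤ n - d := by
          have := (hmem0 _).mp hjmem; omega
        exact_mod_cast (by omega : M.tau (k - 1) - M.tau j ≤ (n - (d - 1 + 1) : ℕ))
      have := h j (by omega) ⟨Nat.zero_le _, hc⟩
      rcases this with h' | ⟨i, hi1, hi2, hφi⟩
      · exact Or.inl h'
      · exact Or.inr ⟨i, hi1, by omega, hφi⟩
    · exfalso
      refine h ⟨by omega, ?_⟩
      show ((M.tau k - M.tau (k - 1) : ℕ) : ℕ∞) ≤ ((d - 1 + 1 : ℕ) : ℕ∞)
      exact_mod_cast (by omega : M.tau k - M.tau (k - 1) ≤ d - 1 + 1)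
end

section
/- The unfolding equivalence for metric until can fail on non-strict traces: there exists a non-strict timed HT-trace M of length 2 and atoms p, a such that M,0 ⊨ p U_{[0,1]} a but M,0 ⊭ a ∨ (p ∧ ○_{[1,1]}(p U_{[0,0]} a)). Concretely, take T₀ = H₀ = {p}, T₁ = H₁ = {a}, τ(0) = τ(1) = 0. -/
open scoped Classical ENat

/-- the until-unfolding can fail on non-strict traces.  With atoms
`p = 0`, `a = 1`, `T₀ = H₀ = {p}`, `T₁ = H₁ = {a}` and `τ(0) = τ(1) = 0`, we get
`M,0 ⊨ p U_{[0,1]} a` but `M,0 ⊭ a ∨ (p ∧ ○_{[1,1]} (p U_{[0,0]} a))`. -/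
theorem until_unfolding_fails_nonstrict :
    ∃ M : TimedTrace (Fin 2),
      M.lam = 2 ∧ ¬ M.strict ∧
      M.H 0 = {0} ∧ M.T 0 = {0} ∧ M.H 1 = {1} ∧ M.T 1 = {1} ∧
      M.tau 0 = 0 ∧ M.tau 1 = 0 ∧
      sat M 0 (MF.until_ (0, (1 : ℕ∞)) (MF.atom 0) (MF.atom 1)) ∧
      ¬ sat M 0 (MF.or (MF.atom 1) (MF.and (MF.atom 0)
          (MF.next (1, (1 : ℕ∞)) (MF.until_ (0, (0 : ℕ∞)) (MF.atom 0) (MF.atom 1))))) := by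
  refine ⟨{ lam := 2,
            H := fun k => if k = 0 then {0} else {1},
            T := fun k => if k = 0 then {0} else {1},
            tau := fun _ => 0,
            sub := fun i _ => subset_rfl,
            mono := fun i _ => le_rfl,
            zero := rfl }, rfl, ?_, rfl, rfl, rfl, rfl, rfl, rfl, ?_, ?_⟩
  · intro h
    have := h 0 (by norm_num)
    simp at this
  · exact ⟨1, by norm_num, by norm_num, ⟨by norm_num, by norm_num⟩,
      by simp [sat], fun i h1 h2 => by
        interval_cases i
        simp [sat]⟩
  · rintro (h | ⟨hp, hn⟩)
    · simp [sat] at h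
    · obtain ⟨hl, ⟨j, hj1, hj2, hj3, hj4, hj5⟩, hm⟩ := hn
      exact absurd hm.1 (by norm_num)
end

section
/- For every timed HT-trace M = ((H,T),τ) of length λ, every k < λ, and every metric formula φ: M,k ⊨ φ (in MHT semantics) iff the associated three-valued valuation satisfies m(k,φ) = 2; moreover ((T,T),τ),k ⊨ φ iff m(k,φ) ≠ 0. -/
open scoped Classical ENat

section Aux

private lemma sup_eq_two' {S : Set ℕ} (hb : ∀ v ∈ S, v ≤ 2) : sSup S = 2 ↔ 2 ∈ S := by
  constructor
  · intro h
    rcases S.eq_empty_or_nonempty with rfl | hne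
    · simp at h
    · have := Nat.sSup_mem hne ⟨2, hb⟩
      rwa [h] at this
  · intro h
    have h1 : 2 ≤ sSup S := le_csSup ⟨2, hb⟩ h
    have h2 : sSup S ≤ 2 := csSup_le' hb
    omega

private lemma sup_ne_zero' {S : Set ℕ} (hb : ∀ v ∈ S, v ≤ 2) :
    sSup S ≠ 0 ↔ ∃ v ∈ S, v ≠ 0 := by
  constructor
  · intro h
    rcases S.eq_empty_or_nonempty with rfl | hne
    · simp at h
    · exact ⟨sSup S, Nat.sSup_mem hne ⟨2, hb⟩, h⟩
  · rintro ⟨v, hv, hv0⟩ h0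
    have := le_csSup (⟨2, hb⟩ : BddAbove S) hv
    omega

private lemma inf_eq_two' {S : Set ℕ} (hb : ∀ v ∈ S, v ≤ 2) :
    sInf (insert 2 S) = 2 ↔ ∀ v ∈ S, v = 2 := by
  constructor
  · intro h v hv
    have h1 := Nat.sInf_le (show v ∈ insert 2 S from Set.mem_insert_of_mem _ hv)
    have h2 := hb v hv
    omega
  · intro h
    have h1 : sInf (insert 2 S) ≤ 2 := Nat.sInf_le (Set.mem_insert _ _)
    have h2 : 2 ≤ sInf (insert 2 S) := by
      apply le_csInf ⟨2, Set.mem_insert _ _⟩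
      rintro b (rfl | hb2)
      · exact le_rfl
      · exact (h b hb2).ge
    omega

private lemma inf_ne_zero' {S : Set ℕ} :
    sInf (insert 2 S) ≠ 0 ↔ ∀ v ∈ S, v ≠ 0 := by
  constructor
  · intro h v hv h0
    have := Nat.sInf_le (show v ∈ insert 2 S from Set.mem_insert_of_mem _ hv)
    omega
  · intro h h0
    have hmem := Nat.sInf_mem (s := insert 2 S) ⟨2, Set.mem_insert _ _⟩
    rw [h0] at hmem
    rcases hmem with h2 | hS
    · exact absurd h2 (by norm_num)
    · exact h 0 hS rfl

private lemma mval_le_two {A : Type} (M : TimedTrace A) (φ : MF A) (k : ℕ) :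
    mval M φ k ≤ 2 := by
  induction φ generalizing k with
  | bot => simp [mval]
  | atom a => simp only [mval]; split_ifs <;> omega
  | and φ ψ ihφ ihψ => exact le_trans (min_le_left _ _) (ihφ k)
  | or φ ψ ihφ ihψ => simp only [mval]; exact max_le (ihφ k) (ihψ k)
  | imp φ ψ ihφ ihψ => simp only [mval]; split_ifs <;> [exact le_rfl; exact ihψ k]
  | prev I φ ih => simp only [mval]; split_ifs <;> [exact ih _; omega]
  | wprev I φ ih => simp only [mval]; split_ifs <;> [exact le_rfl; exact ih _]
  | next I φ ih => simp only [mval]; split_ifs <;> [exact ih _; omega]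
  | wnext I φ ih => simp only [mval]; split_ifs <;> [exact le_rfl; exact ih _]
  | since I φ ψ ihφ ihψ =>
      refine csSup_le' ?_
      rintro v ⟨j, _, _, rfl⟩
      exact le_trans (min_le_left _ _) (ihψ j)
  | trigger I φ ψ ihφ ihψ => exact Nat.sInf_le (Set.mem_insert _ _)
  | until_ I φ ψ ihφ ihψ =>
      refine csSup_le' ?_
      rintro v ⟨j, _, _, _, rfl⟩
      exact le_trans (min_le_left _ _) (ihψ j)
  | release I φ ψ ihφ ihψ => exact Nat.sInf_le (Set.mem_insert _ _)

variable {A : Type} (M : TimedTrace A)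

@[simp] private lemma tot_lam : M.tot.lam = M.lam := rfl
@[simp] private lemma tot_tau : M.tot.tau = M.tau := rfl
@[simp] private lemma tot_H : M.tot.H = M.T := rfl
@[simp] private lemma tot_tot : M.tot.tot = M.tot := rfl

private lemma main {A : Type} (M : TimedTrace A) (φ : MF A) :
    ∀ k : ℕ, (k : ℕ∞) < M.lam →
      (sat M k φ ↔ mval M φ k = 2) ∧ (sat M.tot k φ ↔ mval M φ k ≠ 0) := by
  induction φ with
  | bot => intro k hk; simp [sat, mval]
  | atom a =>
      intro k hk
      have hsub := M.sub k hk
      simp only [sat, mval, tot_H]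
      split_ifs with h1 h2 <;> constructor <;> simp_all
      exact hsub h1
  | and φ ψ ihφ ihψ =>
      intro k hk
      obtain ⟨a1, a2⟩ := ihφ k hk
      obtain ⟨b1, b2⟩ := ihψ k hk
      have hφ2 := mval_le_two M φ k
      have hψ2 := mval_le_two M ψ k
      simp only [sat, mval]
      rw [a1, b1, a2, b2]
      omega
  | or φ ψ ihφ ihψ =>
      intro k hk
      obtain ⟨a1, a2⟩ := ihφ k hk
      obtain ⟨b1, b2⟩ := ihψ k hk
      have hφ2 := mval_le_two M φ k
      have hψ2 := mval_le_two M ψ k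
      simp only [sat, mval]
      rw [a1, b1, a2, b2]
      omega
  | imp φ ψ ihφ ihψ =>
      intro k hk
      obtain ⟨a1, a2⟩ := ihφ k hk
      obtain ⟨b1, b2⟩ := ihψ k hk
      have hφ2 := mval_le_two M φ k
      have hψ2 := mval_le_two M ψ k
      simp only [sat, mval, tot_tot]
      rw [a1, b1, a2, b2]
      split_ifs <;> omega
  | prev I φ ih =>
      intro k hk
      have hk1 : ((k - 1 : ℕ) : ℕ∞) < M.lam :=
        lt_of_le_of_lt (by exact_mod_cast Nat.sub_le k 1) hk
      obtain ⟨h1, h2⟩ := ih (k - 1) hk1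
      simp only [sat, mval, tot_tau]
      rw [h1, h2]
      constructor
      all_goals split_ifs with h
      · exact ⟨fun hx => hx.2.1, fun hx => ⟨h.1, hx, h.2⟩⟩
      · exact ⟨fun hx => absurd ⟨hx.1, hx.2.2⟩ h, fun hx => absurd hx (by norm_num)⟩
      · exact ⟨fun hx => hx.2.1, fun hx => ⟨h.1, hx, h.2⟩⟩
      · exact ⟨fun hx => absurd ⟨hx.1, hx.2.2⟩ h, fun hx => absurd rfl hx⟩
  | wprev I φ ih =>
      intro k hk
      have hk1 : ((k - 1 : ℕ) : ℕ∞) < M.lam :=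
        lt_of_le_of_lt (by exact_mod_cast Nat.sub_le k 1) hk
      obtain ⟨h1, h2⟩ := ih (k - 1) hk1
      simp only [sat, mval, tot_tau]
      rw [h1, h2]
      constructor
      all_goals split_ifs with h
      · exact ⟨fun _ => rfl, fun _ => by tauto⟩
      · constructor
        · rintro (hx | hx | hx)
          · exact absurd (Or.inl hx) h
          · exact hx
          · exact absurd (Or.inr hx) h
        · exact fun hx => Or.inr (Or.inl hx)
      · exact ⟨fun _ => by norm_num, fun _ => by tauto⟩
      · constructor
        · rintro (hx | hx | hx)
          · exact absurd (Or.inl hx) h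
          · exact hx
          · exact absurd (Or.inr hx) h
        · exact fun hx => Or.inr (Or.inl hx)
  | next I φ ih =>
      intro k hk
      simp only [sat, mval, tot_tau, tot_lam]
      split_ifs with h
      · obtain ⟨hl, hm⟩ := h
        obtain ⟨h1, h2⟩ := ih (k + 1) hl
        rw [h1, h2]
        constructor <;> constructor <;> intro hx
        · exact hx.2.1
        · exact ⟨hl, hx, hm⟩
        · exact hx.2.1
        · exact ⟨hl, hx, hm⟩
      · constructor
        · exact ⟨fun hx => absurd ⟨hx.1, hx.2.2⟩ h, fun hx => absurd hx (by norm_num)⟩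
        · exact ⟨fun hx => absurd ⟨hx.1, hx.2.2⟩ h, fun hx => absurd rfl hx⟩
  | wnext I φ ih =>
      intro k hk
      simp only [sat, mval, tot_tau, tot_lam]
      split_ifs with h
      · constructor <;> constructor <;> intro hx <;> tauto
      · push_neg at h
        obtain ⟨hne, hm⟩ := h
        have hle : ((k + 1 : ℕ) : ℕ∞) ≤ M.lam := by
          push_cast
          exact (ENat.add_one_le_iff (by simp)).mpr hk
        have hl : ((k + 1 : ℕ) : ℕ∞) < M.lam := lt_of_le_of_ne hle hne
        obtain ⟨h1, h2⟩ := ih (k + 1) hl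
        rw [h1, h2]
        constructor <;> constructor <;> intro hx
        · rcases hx with hx | hx | hx
          · exact absurd hx hne
          · exact hx
          · exact absurd hm hx
        · exact Or.inr (Or.inl hx)
        · rcases hx with hx | hx | hx
          · exact absurd hx hne
          · exact hx
          · exact absurd hm hx
        · exact Or.inr (Or.inl hx)
  | since I φ ψ ihφ ihψ =>
      intro k hk
      have hidx : ∀ j : ℕ, j ≤ k → ((j : ℕ) : ℕ∞) < M.lam :=
        fun j hj => lt_of_le_of_lt (by exact_mod_cast hj) hk
      have hbS : ∀ v ∈ {v : ℕ | ∃ j : ℕ, j ≤ k ∧ memI I (M.tau k - M.tau j) ∧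
          v = min (mval M ψ j)
            (sInf (insert 2 {w : ℕ | ∃ i : ℕ, j < i ∧ i ≤ k ∧ w = mval M φ i}))}, v ≤ 2 := by
        rintro v ⟨j, _, _, rfl⟩
        exact le_trans (min_le_left _ _) (mval_le_two M ψ j)
      have hbT : ∀ j : ℕ, ∀ w ∈ {w : ℕ | ∃ i : ℕ, j < i ∧ i ≤ k ∧ w = mval M φ i}, w ≤ 2 := by
        rintro j w ⟨i, _, _, rfl⟩
        exact mval_le_two M φ i
      constructor
      · show _ ↔ sSup _ = 2
        rw [sup_eq_two' hbS]
        constructor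
        · rintro ⟨j, hjk, hm, hψ, hφ⟩
          refine ⟨j, hjk, hm, ?_⟩
          have h1 : mval M ψ j = 2 := (ihψ j (hidx j hjk)).1.mp hψ
          have h2 : sInf (insert 2 {w : ℕ | ∃ i : ℕ, j < i ∧ i ≤ k ∧ w = mval M φ i}) = 2 := by
            rw [inf_eq_two' (hbT j)]
            rintro w ⟨i, hji, hik, rfl⟩
            exact (ihφ i (hidx i hik)).1.mp (hφ i hji hik)
          omega
        · rintro ⟨j, hjk, hm, he⟩
          have hb1 := mval_le_two M ψ j
          have hb2 : sInf (insert 2 {w : ℕ | ∃ i : ℕ, j < i ∧ i ≤ k ∧ w = mval M φ i}) ≤ 2 :=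
            Nat.sInf_le (Set.mem_insert _ _)
          have h1 : mval M ψ j = 2 := by omega
          have h2 : sInf (insert 2 {w : ℕ | ∃ i : ℕ, j < i ∧ i ≤ k ∧ w = mval M φ i}) = 2 := by
            omega
          rw [inf_eq_two' (hbT j)] at h2
          refine ⟨j, hjk, hm, (ihψ j (hidx j hjk)).1.mpr h1, fun i hji hik => ?_⟩
          exact (ihφ i (hidx i hik)).1.mpr (h2 _ ⟨i, hji, hik, rfl⟩)
      · show _ ↔ sSup _ ≠ 0
        rw [sup_ne_zero' hbS]
        constructor
        · rintro ⟨j, hjk, hm, hψ, hφ⟩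
          have h1 : mval M ψ j ≠ 0 := (ihψ j (hidx j hjk)).2.mp hψ
          have h2 : sInf (insert 2 {w : ℕ | ∃ i : ℕ, j < i ∧ i ≤ k ∧ w = mval M φ i}) ≠ 0 := by
            rw [inf_ne_zero']
            rintro w ⟨i, hji, hik, rfl⟩
            exact (ihφ i (hidx i hik)).2.mp (hφ i hji hik)
          exact ⟨_, ⟨j, hjk, hm, rfl⟩, by omega⟩
        · rintro ⟨v, ⟨j, hjk, hm, rfl⟩, hv⟩
          have h1 : mval M ψ j ≠ 0 := by omega
          have h2 : sInf (insert 2 {w : ℕ | ∃ i : ℕ, j < i ∧ i ≤ k ∧ w = mval M φ i}) ≠ 0 := by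
            omega
          rw [inf_ne_zero'] at h2
          refine ⟨j, hjk, hm, (ihψ j (hidx j hjk)).2.mpr h1, fun i hji hik => ?_⟩
          exact (ihφ i (hidx i hik)).2.mpr (h2 _ ⟨i, hji, hik, rfl⟩)
  | trigger I φ ψ ihφ ihψ =>
      intro k hk
      have hidx : ∀ j : ℕ, j ≤ k → ((j : ℕ) : ℕ∞) < M.lam :=
        fun j hj => lt_of_le_of_lt (by exact_mod_cast hj) hk
      have hbS : ∀ v ∈ {v : ℕ | ∃ j : ℕ, j ≤ k ∧ memI I (M.tau k - M.tau j) ∧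
          v = max (mval M ψ j)
            (sSup {w : ℕ | ∃ i : ℕ, j < i ∧ i ≤ k ∧ w = mval M φ i})}, v ≤ 2 := by
        rintro v ⟨j, _, _, rfl⟩
        refine max_le (mval_le_two M ψ j) (csSup_le' ?_)
        rintro w ⟨i, _, _, rfl⟩
        exact mval_le_two M φ i
      have hbT : ∀ j : ℕ, ∀ w ∈ {w : ℕ | ∃ i : ℕ, j < i ∧ i ≤ k ∧ w = mval M φ i}, w ≤ 2 := by
        rintro j w ⟨i, _, _, rfl⟩
        exact mval_le_two M φ i
      constructor
      · show _ ↔ sInf _ = 2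
        rw [inf_eq_two' hbS]
        constructor
        · rintro hs v ⟨j, hjk, hm, rfl⟩
          have hb1 := mval_le_two M ψ j
          have hb2 : sSup {w : ℕ | ∃ i : ℕ, j < i ∧ i ≤ k ∧ w = mval M φ i} ≤ 2 :=
            csSup_le' (hbT j)
          rcases hs j hjk hm with h | ⟨i, hji, hik, hi⟩
          · have := (ihψ j (hidx j hjk)).1.mp h
            omega
          · have h2 : sSup {w : ℕ | ∃ i : ℕ, j < i ∧ i ≤ k ∧ w = mval M φ i} = 2 := by
              rw [sup_eq_two' (hbT j)]
              exact ⟨i, hji, hik, ((ihφ i (hidx i hik)).1.mp hi).symm⟩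
            omega
        · intro hs j hjk hm
          have := hs _ ⟨j, hjk, hm, rfl⟩
          have hb1 := mval_le_two M ψ j
          have hb2 : sSup {w : ℕ | ∃ i : ℕ, j < i ∧ i ≤ k ∧ w = mval M φ i} ≤ 2 :=
            csSup_le' (hbT j)
          rcases (by omega : mval M ψ j = 2 ∨
              sSup {w : ℕ | ∃ i : ℕ, j < i ∧ i ≤ k ∧ w = mval M φ i} = 2) with h | h
          · exact Or.inl ((ihψ j (hidx j hjk)).1.mpr h)
          · rw [sup_eq_two' (hbT j)] at h
            obtain ⟨i, hji, hik, hi⟩ := h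
            exact Or.inr ⟨i, hji, hik, (ihφ i (hidx i hik)).1.mpr hi.symm⟩
      · show _ ↔ sInf _ ≠ 0
        rw [inf_ne_zero']
        constructor
        · rintro hs v ⟨j, hjk, hm, rfl⟩
          rcases hs j hjk hm with h | ⟨i, hji, hik, hi⟩
          · have := (ihψ j (hidx j hjk)).2.mp h
            omega
          · have h2 : sSup {w : ℕ | ∃ i : ℕ, j < i ∧ i ≤ k ∧ w = mval M φ i} ≠ 0 := by
              rw [sup_ne_zero' (hbT j)]
              exact ⟨_, ⟨i, hji, hik, rfl⟩, (ihφ i (hidx i hik)).2.mp hi⟩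
            omega
        · intro hs j hjk hm
          have := hs _ ⟨j, hjk, hm, rfl⟩
          rcases (by omega : mval M ψ j ≠ 0 ∨
              sSup {w : ℕ | ∃ i : ℕ, j < i ∧ i ≤ k ∧ w = mval M φ i} ≠ 0) with h | h
          · exact Or.inl ((ihψ j (hidx j hjk)).2.mpr h)
          · rw [sup_ne_zero' (hbT j)] at h
            obtain ⟨w, ⟨i, hji, hik, rfl⟩, hi⟩ := h
            exact Or.inr ⟨i, hji, hik, (ihφ i (hidx i hik)).2.mpr hi⟩
  | until_ I φ ψ ihφ ihψ =>
      intro k hk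
      have hidx : ∀ j : ℕ, ((j : ℕ) : ℕ∞) < M.lam → ∀ i : ℕ, i < j → ((i : ℕ) : ℕ∞) < M.lam :=
        fun j hj i hi => lt_trans (by exact_mod_cast hi) hj
      have hbS : ∀ v ∈ {v : ℕ | ∃ j : ℕ, k ≤ j ∧ ((j : ℕ) : ℕ∞) < M.lam ∧
          memI I (M.tau j - M.tau k) ∧
          v = min (mval M ψ j)
            (sInf (insert 2 {w : ℕ | ∃ i : ℕ, k ≤ i ∧ i < j ∧ w = mval M φ i}))}, v ≤ 2 := by
        rintro v ⟨j, _, _, _, rfl⟩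
        exact le_trans (min_le_left _ _) (mval_le_two M ψ j)
      have hbT : ∀ j : ℕ, ∀ w ∈ {w : ℕ | ∃ i : ℕ, k ≤ i ∧ i < j ∧ w = mval M φ i}, w ≤ 2 := by
        rintro j w ⟨i, _, _, rfl⟩
        exact mval_le_two M φ i
      constructor
      · show _ ↔ sSup _ = 2
        rw [sup_eq_two' hbS]
        constructor
        · rintro ⟨j, hkj, hjl, hm, hψ, hφ⟩
          refine ⟨j, hkj, hjl, hm, ?_⟩
          have h1 : mval M ψ j = 2 := (ihψ j hjl).1.mp hψ
          have h2 : sInf (insert 2 {w : ℕ | ∃ i : ℕ, k ≤ i ∧ i < j ∧ w = mval M φ i}) = 2 := by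
            rw [inf_eq_two' (hbT j)]
            rintro w ⟨i, hki, hij, rfl⟩
            exact (ihφ i (hidx j hjl i hij)).1.mp (hφ i hki hij)
          omega
        · rintro ⟨j, hkj, hjl, hm, he⟩
          have hb1 := mval_le_two M ψ j
          have hb2 : sInf (insert 2 {w : ℕ | ∃ i : ℕ, k ≤ i ∧ i < j ∧ w = mval M φ i}) ≤ 2 :=
            Nat.sInf_le (Set.mem_insert _ _)
          have h1 : mval M ψ j = 2 := by omega
          have h2 : sInf (insert 2 {w : ℕ | ∃ i : ℕ, k ≤ i ∧ i < j ∧ w = mval M φ i}) = 2 := by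
            omega
          rw [inf_eq_two' (hbT j)] at h2
          refine ⟨j, hkj, hjl, hm, (ihψ j hjl).1.mpr h1, fun i hki hij => ?_⟩
          exact (ihφ i (hidx j hjl i hij)).1.mpr (h2 _ ⟨i, hki, hij, rfl⟩)
      · show _ ↔ sSup _ ≠ 0
        rw [sup_ne_zero' hbS]
        constructor
        · rintro ⟨j, hkj, hjl, hm, hψ, hφ⟩
          have h1 : mval M ψ j ≠ 0 := (ihψ j hjl).2.mp hψ
          have h2 : sInf (insert 2 {w : ℕ | ∃ i : ℕ, k ≤ i ∧ i < j ∧ w = mval M φ i}) ≠ 0 := by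
            rw [inf_ne_zero']
            rintro w ⟨i, hki, hij, rfl⟩
            exact (ihφ i (hidx j hjl i hij)).2.mp (hφ i hki hij)
          exact ⟨_, ⟨j, hkj, hjl, hm, rfl⟩, by omega⟩
        · rintro ⟨v, ⟨j, hkj, hjl, hm, rfl⟩, hv⟩
          have h1 : mval M ψ j ≠ 0 := by omega
          have h2 : sInf (insert 2 {w : ℕ | ∃ i : ℕ, k ≤ i ∧ i < j ∧ w = mval M φ i}) ≠ 0 := by
            omega
          rw [inf_ne_zero'] at h2
          refine ⟨j, hkj, hjl, hm, (ihψ j hjl).2.mpr h1, fun i hki hij => ?_⟩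
          exact (ihφ i (hidx j hjl i hij)).2.mpr (h2 _ ⟨i, hki, hij, rfl⟩)
  | release I φ ψ ihφ ihψ =>
      intro k hk
      have hidx : ∀ j : ℕ, ((j : ℕ) : ℕ∞) < M.lam → ∀ i : ℕ, i < j → ((i : ℕ) : ℕ∞) < M.lam :=
        fun j hj i hi => lt_trans (by exact_mod_cast hi) hj
      have hbS : ∀ v ∈ {v : ℕ | ∃ j : ℕ, k ≤ j ∧ ((j : ℕ) : ℕ∞) < M.lam ∧
          memI I (M.tau j - M.tau k) ∧
          v = max (mval M ψ j)
            (sSup {w : ℕ | ∃ i : ℕ, k ≤ i ∧ i < j ∧ w = mval M φ i})}, v ≤ 2 := by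
        rintro v ⟨j, _, _, _, rfl⟩
        refine max_le (mval_le_two M ψ j) (csSup_le' ?_)
        rintro w ⟨i, _, _, rfl⟩
        exact mval_le_two M φ i
      have hbT : ∀ j : ℕ, ∀ w ∈ {w : ℕ | ∃ i : ℕ, k ≤ i ∧ i < j ∧ w = mval M φ i}, w ≤ 2 := by
        rintro j w ⟨i, _, _, rfl⟩
        exact mval_le_two M φ i
      constructor
      · show _ ↔ sInf _ = 2
        rw [inf_eq_two' hbS]
        constructor
        · rintro hs v ⟨j, hkj, hjl, hm, rfl⟩
          have hb1 := mval_le_two M ψ j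
          have hb2 : sSup {w : ℕ | ∃ i : ℕ, k ≤ i ∧ i < j ∧ w = mval M φ i} ≤ 2 :=
            csSup_le' (hbT j)
          rcases hs j hkj hjl hm with h | ⟨i, hki, hij, hi⟩
          · have := (ihψ j hjl).1.mp h
            omega
          · have h2 : sSup {w : ℕ | ∃ i : ℕ, k ≤ i ∧ i < j ∧ w = mval M φ i} = 2 := by
              rw [sup_eq_two' (hbT j)]
              exact ⟨i, hki, hij, ((ihφ i (hidx j hjl i hij)).1.mp hi).symm⟩
            omega
        · intro hs j hkj hjl hm
          have := hs _ ⟨j, hkj, hjl, hm, rfl⟩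
          have hb1 := mval_le_two M ψ j
          have hb2 : sSup {w : ℕ | ∃ i : ℕ, k ≤ i ∧ i < j ∧ w = mval M φ i} ≤ 2 :=
            csSup_le' (hbT j)
          rcases (by omega : mval M ψ j = 2 ∨
              sSup {w : ℕ | ∃ i : ℕ, k ≤ i ∧ i < j ∧ w = mval M φ i} = 2) with h | h
          · exact Or.inl ((ihψ j hjl).1.mpr h)
          · rw [sup_eq_two' (hbT j)] at h
            obtain ⟨i, hki, hij, hi⟩ := h
            exact Or.inr ⟨i, hki, hij, (ihφ i (hidx j hjl i hij)).1.mpr hi.symm⟩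
      · show _ ↔ sInf _ ≠ 0
        rw [inf_ne_zero']
        constructor
        · rintro hs v ⟨j, hkj, hjl, hm, rfl⟩
          rcases hs j hkj hjl hm with h | ⟨i, hki, hij, hi⟩
          · have := (ihψ j hjl).2.mp h
            omega
          · have h2 : sSup {w : ℕ | ∃ i : ℕ, k ≤ i ∧ i < j ∧ w = mval M φ i} ≠ 0 := by
              rw [sup_ne_zero' (hbT j)]
              exact ⟨_, ⟨i, hki, hij, rfl⟩, (ihφ i (hidx j hjl i hij)).2.mp hi⟩
            omega
        · intro hs j hkj hjl hm
          have := hs _ ⟨j, hkj, hjl, hm, rfl⟩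
          rcases (by omega : mval M ψ j ≠ 0 ∨
              sSup {w : ℕ | ∃ i : ℕ, k ≤ i ∧ i < j ∧ w = mval M φ i} ≠ 0) with h | h
          · exact Or.inl ((ihψ j hjl).2.mpr h)
          · rw [sup_ne_zero' (hbT j)] at h
            obtain ⟨w, ⟨i, hki, hij, rfl⟩, hi⟩ := h
            exact Or.inr ⟨i, hki, hij, (ihφ i (hidx j hjl i hij)).2.mpr hi⟩

end Aux

/-- equivalence of the MHT semantics and the three-valued
characterization: `M,k ⊨ φ` iff `m(k,φ) = 2`, and `(T,T),k ⊨ φ` iff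
`m(k,φ) ≠ 0`. -/
theorem sat_iff_mval {A : Type} (M : TimedTrace A) (k : ℕ) (hk : (k : ℕ∞) < M.lam)
    (φ : MF A) :
    (sat M k φ ↔ mval M φ k = 2) ∧ (sat M.tot k φ ↔ mval M φ k ≠ 0) := by
  exact main M φ k hk
end
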